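/- Refinement step of the CEGAR loop: with φ₀ a CLTL> formula, L ⊆ (2^AP)^ω such that sup_{u∈L} ⟦φ₀⟧_sup(u) is finite, and φ = φ₀ ∧ φ₀[n+1] for some n strictly less than sup_L ⟦φ₀⟧_sup: the function u ↦ ⟦φ⟧_sup(u) refines ⟦φ₀⟧_sup relative to L, i.e., sup_L ⟦φ⟧_sup = sup_L ⟦φ₀⟧_sup and every u ∈ L with ⟦φ₀⟧_sup(u) = 0 also has ⟦φ⟧_sup(u) = 0. -/

import Mathlib

open scoped Classical

/-- Cost LTL formulas (in negative normal form), including both the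
`U≤` operator (`uleq`) of CLTL≤ and the dual `R>` operator (`rgt`) of CLTL>. -/
inductive CLTL (AP : Type) : Type where
  | pos (a : AP)
  | neg (a : AP)
  | disj (φ ψ : CLTL AP)
  | conj (φ ψ : CLTL AP)
  | untl (φ ψ : CLTL AP)
  | rels (φ ψ : CLTL AP)
  | next (φ : CLTL AP)
  | uleq (φ ψ : CLTL AP)
  | rgt (φ ψ : CLTL AP)

/-- The suffix `u^i` of an infinite word. -/
def shift {AP : Type} (u : ℕ → Set AP) (i : ℕ) : ℕ → Set AP := fun k => u (i + k)

/-- The quantitative satisfaction relation `(u,n) ⊨ φ`. -/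
def CLTL.sat {AP : Type} : CLTL AP → (ℕ → Set AP) → ℕ → Prop
  | .pos a, u, _ => a ∈ u 0
  | .neg a, u, _ => a ∉ u 0
  | .disj φ ψ, u, n => φ.sat u n ∨ ψ.sat u n
  | .conj φ ψ, u, n => φ.sat u n ∧ ψ.sat u n
  | .untl φ ψ, u, n => ∃ i, ψ.sat (shift u i) n ∧ ∀ j < i, φ.sat (shift u j) n
  | .rels φ ψ, u, n => ∀ i, ψ.sat (shift u i) n ∨ ∃ j < i, φ.sat (shift u j) n
  | .next φ, u, n => φ.sat (shift u 1) n
  | .uleq φ ψ, u, n => ∃ i, ψ.sat (shift u i) n ∧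
      ((Finset.range i).filter (fun j => ¬ φ.sat (shift u j) n)).card ≤ n
  | .rgt φ ψ, u, n => ∀ i, ψ.sat (shift u i) n ∨
      n < ((Finset.range i).filter (fun j => φ.sat (shift u j) n)).card

/-- `φ` contains no occurrence of `R>`, i.e. `φ` is a CLTL≤ formula. -/
def CLTL.noRgt {AP : Type} : CLTL AP → Prop
  | .pos _ => True
  | .neg _ => True
  | .disj φ ψ => φ.noRgt ∧ ψ.noRgt
  | .conj φ ψ => φ.noRgt ∧ ψ.noRgt
  | .untl φ ψ => φ.noRgt ∧ ψ.noRgt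
  | .rels φ ψ => φ.noRgt ∧ ψ.noRgt
  | .next φ => φ.noRgt
  | .uleq φ ψ => φ.noRgt ∧ ψ.noRgt
  | .rgt _ _ => False

/-- `φ` contains no occurrence of `U≤`, i.e. `φ` is a CLTL> formula. -/
def CLTL.noUleq {AP : Type} : CLTL AP → Prop
  | .pos _ => True
  | .neg _ => True
  | .disj φ ψ => φ.noUleq ∧ ψ.noUleq
  | .conj φ ψ => φ.noUleq ∧ ψ.noUleq
  | .untl φ ψ => φ.noUleq ∧ ψ.noUleq
  | .rels φ ψ => φ.noUleq ∧ ψ.noUleq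
  | .next φ => φ.noUleq
  | .uleq _ _ => False
  | .rgt φ ψ => φ.noUleq ∧ ψ.noUleq

/-- `φ` is a pure LTL formula (in NNF): no `U≤` and no `R>`. -/
def CLTL.isLTL {AP : Type} (φ : CLTL AP) : Prop := φ.noRgt ∧ φ.noUleq

/-- `⟦φ⟧_inf(u) = inf { n | (u,n) ⊨ φ }`, with `inf ∅ = ∞`. -/
noncomputable def CLTL.semInf {AP : Type} (φ : CLTL AP) (u : ℕ → Set AP) : ℕ∞ :=
  sInf {m : ℕ∞ | ∃ n : ℕ, m = n ∧ φ.sat u n}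

/-- `⟦φ⟧_sup(u) = sup { n | (u,n) ⊨ φ }`, with `sup ∅ = 0`. -/
noncomputable def CLTL.semSup {AP : Type} (φ : CLTL AP) (u : ℕ → Set AP) : ℕ∞ :=
  sSup {m : ℕ∞ | ∃ n : ℕ, m = n ∧ φ.sat u n}

/-- Satisfaction of an LTL formula (the parameter `n` is irrelevant for LTL). -/
def CLTL.ltlSat {AP : Type} (φ : CLTL AP) (u : ℕ → Set AP) : Prop := φ.sat u 0

/-- Syntactic negation: dualize every operator and negate the literals. -/
def CLTL.negate {AP : Type} : CLTL AP → CLTL AP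
  | .pos a => .neg a
  | .neg a => .pos a
  | .disj φ ψ => .conj φ.negate ψ.negate
  | .conj φ ψ => .disj φ.negate ψ.negate
  | .untl φ ψ => .rels φ.negate ψ.negate
  | .rels φ ψ => .untl φ.negate ψ.negate
  | .next φ => .next φ.negate
  | .uleq φ ψ => .rgt φ.negate ψ.negate
  | .rgt φ ψ => .uleq φ.negate ψ.negate

/-- Unfolding of `φ₁ U≤ φ₂` at rank `n`:
`(φ₁ U≤ φ₂)[0] = φ₁ U φ₂`, `(φ₁ U≤ φ₂)[n+1] = (φ₁ ∨ X((φ₁ U≤ φ₂)[n])) U φ₂`. -/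
def CLTL.unfoldU {AP : Type} (φ ψ : CLTL AP) : ℕ → CLTL AP
  | 0 => .untl φ ψ
  | n + 1 => .untl (.disj φ (.next (CLTL.unfoldU φ ψ n))) ψ

/-- Relativization `φ[n]` of a CLTL≤ formula, producing an LTL formula. -/
def CLTL.rel {AP : Type} (n : ℕ) : CLTL AP → CLTL AP
  | .pos a => .pos a
  | .neg a => .neg a
  | .disj φ ψ => .disj (φ.rel n) (ψ.rel n)
  | .conj φ ψ => .conj (φ.rel n) (ψ.rel n)
  | .untl φ ψ => .untl (φ.rel n) (ψ.rel n)
  | .rels φ ψ => .rels (φ.rel n) (ψ.rel n)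
  | .next φ => .next (φ.rel n)
  | .uleq φ ψ => CLTL.unfoldU (φ.rel n) (ψ.rel n) n
  | .rgt φ ψ => .rgt (φ.rel n) (ψ.rel n)

/-- Relativization `φ[n] = ¬((¬φ)[n])` of a CLTL> formula. -/
def CLTL.relGt {AP : Type} (n : ℕ) (φ : CLTL AP) : CLTL AP :=
  (CLTL.rel n φ.negate).negate

/-! A CLTL> formula is downward closed in its bound, so the LTL formula `φ₀[n+1]` holds on `u`
exactly when `⟦φ₀⟧_sup(u) > n`: relativizing a CLTL≤ formula at `m` (unfolding each `U≤` `m`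
times) captures `(u, m) ⊨ φ`, and syntactic negation transfers this to CLTL>. Hence
`⟦φ₀ ∧ φ₀[n+1]⟧_sup` agrees with `⟦φ₀⟧_sup` on words of value `> n` and vanishes elsewhere.
Since `sup_L ⟦φ₀⟧_sup > n`, that supremum is approached by words of value `> n`, so the two
suprema over `L` coincide. -/

theorem sSup_image_ite_lt_eq {α β : Type*} [CompleteLinearOrder β] {f : α → β} {s : Set α}
    {b : β} (hb : b < sSup (f '' s)) :
    sSup ((fun x => if b < f x then f x else ⊥) '' s) = sSup (f '' s) := by
  apply le_antisymm
  · rw [sSup_image, sSup_image]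
    exact iSup₂_mono fun x _ => by split_ifs <;> simp
  · refine le_of_forall_lt fun c hc => ?_
    obtain ⟨_, ⟨x, hx, rfl⟩, hcx⟩ := lt_sSup_iff.1 (max_lt hc hb)
    have hbx : b < f x := (le_max_right c b).trans_lt hcx
    exact ((le_max_left c b).trans_lt hcx).trans_le (le_sSup ⟨x, hx, if_pos hbx⟩)

-- The unfolding `(A ∨ X (A U≤ₖ B)) U B ≡ A U≤ₖ₊₁ B`, read on `P j := A(u^j)` and `Q i := B(u^i)`.
theorem Nat.exists_count_not_le_succ_iff (P Q : ℕ → Prop) [DecidablePred P] (k : ℕ) :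
    (∃ i, Q i ∧ ∀ j < i, P j ∨
        ∃ i', Q (j + 1 + i') ∧ Nat.count (fun l => ¬ P (j + 1 + l)) i' ≤ k) ↔
      ∃ i, Q i ∧ Nat.count (fun j => ¬ P j) i ≤ k + 1 := by
  constructor
  · rintro ⟨i, hQ, hall⟩
    by_cases hbad : ∃ j, j < i ∧ ¬ P j
    · -- split off the first failure of `P`
      obtain ⟨hji, hPj⟩ := Nat.find_spec hbad
      rcases hall _ hji with hPj' | ⟨i', hQ', hcount⟩
      · exact absurd hPj' hPj
      have hfirst : Nat.count (fun j => ¬ P j) (Nat.find hbad + 1) = 1 := by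
        rw [Nat.count_succ, if_pos hPj, Nat.count_iff_forall_not.2
          fun m hm hPm => Nat.find_min hbad hm ⟨hm.trans hji, hPm⟩]
      refine ⟨_, hQ', ?_⟩
      rw [Nat.count_add, hfirst]
      omega
    · push Not at hbad
      refine ⟨i, hQ, ?_⟩
      rw [Nat.count_iff_forall_not.2 fun m hm => not_not.2 (hbad m hm)]
      omega
  · rintro ⟨i, hQ, hcount⟩
    refine ⟨i, hQ, fun j hj => or_iff_not_imp_left.2 fun hPj => ⟨i - (j + 1), ?_, ?_⟩⟩
    · rwa [Nat.add_sub_of_le hj]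
    · have hsplit := Nat.count_add (fun j => ¬ P j) (j + 1) (i - (j + 1))
      rw [Nat.add_sub_of_le hj, Nat.count_succ, if_pos hPj] at hsplit
      omega

namespace CLTL

variable {AP : Type}

theorem shift_shift (u : ℕ → Set AP) (i j : ℕ) : shift (shift u i) j = shift u (i + j) := by
  funext k
  simp [shift, add_assoc]

theorem sat_uleq (φ ψ : CLTL AP) (u : ℕ → Set AP) (n : ℕ) :
    (uleq φ ψ).sat u n ↔
      ∃ i, ψ.sat (shift u i) n ∧ Nat.count (fun j => ¬ φ.sat (shift u j) n) i ≤ n := by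
  simp only [sat, Nat.count_eq_card_filter_range]

theorem sat_negate (φ : CLTL AP) (u : ℕ → Set AP) (n : ℕ) :
    φ.negate.sat u n ↔ ¬ φ.sat u n := by
  induction φ generalizing u <;> simp_all [negate, sat, or_iff_not_imp_left]

theorem sat_anti {φ : CLTL AP} (h : φ.noUleq) {m n : ℕ} (hmn : m ≤ n) {u : ℕ → Set AP} :
    φ.sat u n → φ.sat u m := by
  induction φ generalizing u with
  | pos | neg => exact id
  | disj φ ψ ihφ ihψ => exact Or.imp (ihφ h.1) (ihψ h.2)
  | conj φ ψ ihφ ihψ => exact And.imp (ihφ h.1) (ihψ h.2)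
  | untl φ ψ ihφ ihψ =>
    exact fun ⟨i, hi, hall⟩ => ⟨i, ihψ h.2 hi, fun j hj => ihφ h.1 (hall j hj)⟩
  | rels φ ψ ihφ ihψ =>
    exact fun hs i => (hs i).imp (ihψ h.2) fun ⟨j, hj, hjs⟩ => ⟨j, hj, ihφ h.1 hjs⟩
  | next φ ihφ => exact ihφ h
  | uleq => exact h.elim
  | rgt φ ψ ihφ ihψ =>
    refine fun hs i => (hs i).imp (ihψ h.2) fun hc => hmn.trans_lt (hc.trans_le ?_)
    exact Finset.card_le_card (Finset.monotone_filter_right _ fun j _ hj => ihφ h.1 hj)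

theorem noRgt_negate {φ : CLTL AP} (h : φ.noUleq) : φ.negate.noRgt := by
  induction φ <;> simp_all [negate, noUleq, noRgt]

theorem sat_unfoldU (A B : CLTL AP) (p k : ℕ) (u : ℕ → Set AP) :
    (unfoldU A B k).sat u p ↔
      ∃ i, B.sat (shift u i) p ∧ Nat.count (fun j => ¬ A.sat (shift u j) p) i ≤ k := by
  induction k generalizing u with
  | zero => simp [unfoldU, sat, Nat.count_iff_forall_not]
  | succ k ih =>
    simp only [unfoldU, sat, ih, shift_shift]
    exact Nat.exists_count_not_le_succ_iff (fun j => A.sat (shift u j) p)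
      (fun i => B.sat (shift u i) p) k

theorem sat_rel {φ : CLTL AP} (h : φ.noRgt) (m : ℕ) (u : ℕ → Set AP) (p : ℕ) :
    (rel m φ).sat u p ↔ φ.sat u m := by
  induction φ generalizing u with
  | uleq φ ψ ihφ ihψ => simp only [rel, sat_unfoldU, sat_uleq, ihφ h.1, ihψ h.2]
  | rgt => exact h.elim
  | _ => simp_all [rel, sat, noRgt]

theorem sat_relGt {φ : CLTL AP} (h : φ.noUleq) (m : ℕ) (u : ℕ → Set AP) (p : ℕ) :
    (relGt m φ).sat u p ↔ φ.sat u m := by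
  rw [relGt, sat_negate, sat_rel (noRgt_negate h), sat_negate, not_not]

theorem lt_semSup_iff (φ : CLTL AP) (u : ℕ → Set AP) (k : ℕ∞) :
    k < φ.semSup u ↔ ∃ m : ℕ, k < m ∧ φ.sat u m := by
  simp [semSup, lt_sSup_iff, and_comm]

theorem natCast_lt_semSup_iff {φ : CLTL AP} (h : φ.noUleq) (u : ℕ → Set AP) (n : ℕ) :
    (n : ℕ∞) < φ.semSup u ↔ φ.sat u (n + 1) := by
  rw [lt_semSup_iff]
  refine ⟨fun ⟨m, hnm, hm⟩ => sat_anti h (by exact_mod_cast hnm) hm,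
    fun hs => ⟨n + 1, by exact_mod_cast n.lt_succ_self, hs⟩⟩

theorem semSup_conj_relGt_succ {φ : CLTL AP} (h : φ.noUleq) (n : ℕ) (u : ℕ → Set AP) :
    (conj φ (φ.relGt (n + 1))).semSup u = if (n : ℕ∞) < φ.semSup u then φ.semSup u else 0 := by
  simp only [natCast_lt_semSup_iff h]
  split_ifs with hs <;> simp [semSup, sat, sat_relGt h, hs]

end CLTL

theorem cegar_refinement_step_general {AP : Type} (φ₀ : CLTL AP) (hφ₀ : φ₀.noUleq)
    (L : Set (ℕ → Set AP)) (n : ℕ)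
    (hn : (n : ℕ∞) < sSup (φ₀.semSup '' L)) :
    sSup ((CLTL.conj φ₀ (φ₀.relGt (n + 1))).semSup '' L) = sSup (φ₀.semSup '' L) ∧
    ∀ u ∈ L, φ₀.semSup u = 0 → (CLTL.conj φ₀ (φ₀.relGt (n + 1))).semSup u = 0 := by
  have key := CLTL.semSup_conj_relGt_succ hφ₀ n
  refine ⟨?_, fun u _ h0 => by simp [key, h0]⟩
  rw [funext key, ← bot_eq_zero]
  exact sSup_image_ite_lt_eq hn

/-- the CEGAR refinement step: if `sup_L ⟦φ₀⟧_sup` is finite and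
`n < sup_L ⟦φ₀⟧_sup`, then `⟦φ₀ ∧ φ₀[n+1]⟧_sup` refines `⟦φ₀⟧_sup` relative to `L`. -/
theorem cegar_refinement_step {AP : Type} (φ₀ : CLTL AP) (hφ₀ : φ₀.noUleq)
    (L : Set (ℕ → Set AP)) (n : ℕ)
    (hfin : sSup (φ₀.semSup '' L) ≠ ⊤)
    (hn : (n : ℕ∞) < sSup (φ₀.semSup '' L)) :
    sSup ((CLTL.conj φ₀ (φ₀.relGt (n + 1))).semSup '' L) = sSup (φ₀.semSup '' L) ∧
    ∀ u ∈ L, φ₀.semSup u = 0 → (CLTL.conj φ₀ (φ₀.relGt (n + 1))).semSup u = 0 :=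
  cegar_refinement_step_general φ₀ hφ₀ L n hn
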